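/- Let G be a finite simple graph, let x* be an optimal solution of the LP relaxation LPR of the vertex cover problem on G, let I₀ = {i : x*_i = 0}, I₁ = {i : x*_i = 1}, let Ḡ = G \ (I₀ ∪ I₁), and let γ ≥ 1. If R is a γ-optimal vertex cover of Ḡ, then R ∪ I₁ is a γ-optimal vertex cover of G. -/

import Mathlib

/-!
Since `x* ≤ 1` at an optimum, every edge at a vertex of `I₀` ends in `I₁`, so `R ∪ I₁` covers `G`.
For any vertex cover `S` of `G`, moving a small weight `ε` from `I₁ \ S` to `I₀ ∩ S` keeps `x*`
feasible, so optimality of `x*` gives `|I₁ \ S| ≤ |I₀ ∩ S|`, i.e. `|S ∩ (I₀ ∪ I₁)| ≥ |I₁|`.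
The rest of `S` covers `Ḡ`, hence `|S| ≥ OPT(Ḡ) + |I₁|` and `|R ∪ I₁| ≤ γ OPT(Ḡ) + |I₁| ≤ γ |S|`.
-/

variable {V : Type*} [Fintype V] [DecidableEq V]

/-- `S` is a vertex cover of `G`: every edge has at least one endpoint in `S`. -/
def IsVertexCover (G : SimpleGraph V) (S : Finset V) : Prop :=
  ∀ ⦃a b : V⦄, G.Adj a b → a ∈ S ∨ b ∈ S

/-- `x` is feasible for the LP relaxation LPR of the vertex cover problem on `G`:
`x_i + x_j ≥ 1` for every edge `(i,j)` and `x_i ≥ 0` for all `i`. -/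
def LPFeasible (G : SimpleGraph V) (x : V → ℝ) : Prop :=
  (∀ i : V, 0 ≤ x i) ∧ ∀ ⦃i j : V⦄, G.Adj i j → 1 ≤ x i + x j

/-- `x` is an optimal solution of the LP relaxation LPR on `G`. -/
def LPOptimal (G : SimpleGraph V) (x : V → ℝ) : Prop :=
  LPFeasible G x ∧ ∀ y : V → ℝ, LPFeasible G y → ∑ i : V, x i ≤ ∑ i : V, y i

/-- `G \ D`: the induced subgraph of `G` on `V \ D`, viewed as a graph on the same
vertex type by deleting all edges meeting `D`. -/
def DeleteVerts (G : SimpleGraph V) (D : Finset V) : SimpleGraph V where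
  Adj a b := G.Adj a b ∧ a ∉ D ∧ b ∉ D
  symm := ⟨fun _ _ h => ⟨h.1.symm, h.2.2, h.2.1⟩⟩
  loopless := ⟨fun a h => G.irrefl h.1⟩

/-- `S` is an optimal vertex cover of `G`: a vertex cover of minimum cardinality. -/
def IsOptimalVertexCover (G : SimpleGraph V) (S : Finset V) : Prop :=
  IsVertexCover G S ∧ ∀ T : Finset V, IsVertexCover G T → S.card ≤ T.card

open Finset Filter Topology

section

variable {W : Type*}

theorem IsVertexCover.sdiff_deleteVerts [DecidableEq W] {G : SimpleGraph W}
    {S : Finset W} (hS : IsVertexCover G S) (D : Finset W) :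
    IsVertexCover (DeleteVerts G D) (S \ D) := fun _ _ hab =>
  (hS hab.1).imp (fun ha => mem_sdiff.2 ⟨ha, hab.2.1⟩) (fun hb => mem_sdiff.2 ⟨hb, hab.2.2⟩)

theorem exists_isOptimalVertexCover [Fintype W] (G : SimpleGraph W) :
    ∃ T, IsOptimalVertexCover G T := by
  classical
  obtain ⟨T, hT, hmin⟩ := exists_min_image {T | IsVertexCover G T} card
    ⟨univ, mem_filter.2 ⟨mem_univ _, fun a _ _ => .inl (mem_univ a)⟩⟩
  exact ⟨T, (mem_filter.1 hT).2, fun T' hT' => hmin T' (mem_filter.2 ⟨mem_univ _, hT'⟩)⟩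

theorem disjoint_of_forall_eq_of_ne {β : Type*} {x : W → β} {I0 I1 : Finset W} {a b : β}
    (hI0 : ∀ i ∈ I0, x i = a) (hI1 : ∀ i ∈ I1, x i = b) (hab : a ≠ b) : Disjoint I0 I1 :=
  disjoint_left.2 fun i h0 h1 => hab ((hI0 i h0).symm.trans (hI1 i h1))

theorem LPFeasible.min_one {G : SimpleGraph W} {x : W → ℝ} (hx : LPFeasible G x) :
    LPFeasible G (fun j => min (x j) 1) := by
  refine ⟨fun j => le_min (hx.1 j) zero_le_one, fun a b hab => ?_⟩
  have := hx.2 hab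
  have := hx.1 a
  have := hx.1 b
  simp only [min_def]
  split_ifs <;> linarith

theorem LPOptimal.le_one [Fintype W] {G : SimpleGraph W} {x : W → ℝ} (hx : LPOptimal G x)
    (i : W) : x i ≤ 1 := by
  by_contra! hi
  have hlt : ∑ j, min (x j) 1 < ∑ j, x j :=
    sum_lt_sum (fun j _ => min_le_left _ _) ⟨i, mem_univ i, min_lt_of_right_lt hi⟩
  exact (hx.2 _ hx.1.min_one).not_gt hlt

theorem LPOptimal.eq_one_of_adj_of_eq_zero [Fintype W] {G : SimpleGraph W} {x : W → ℝ}
    (hx : LPOptimal G x) {a b : W} (hab : G.Adj a b) (ha : x a = 0) : x b = 1 := by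
  have := hx.1.2 hab
  exact le_antisymm (hx.le_one b) (by linarith)

theorem exists_pos_le_one_forall_le_of_pos [Finite W] (x : W → ℝ) :
    ∃ ε : ℝ, 0 < ε ∧ ε ≤ 1 ∧ ∀ j, 0 < x j → ε ≤ x j := by
  have hsmall : ∀ᶠ ε in 𝓝[>] (0 : ℝ), 0 < ε ∧ ε ≤ 1 ∧ ∀ j, 0 < x j → ε ≤ x j := by
    refine eventually_mem_nhdsWithin.and
      ((eventually_le_nhds zero_lt_one).filter_mono nhdsWithin_le_nhds |>.and ?_)
    refine eventually_all.2 fun j => ?_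
    by_cases hj : 0 < x j
    · filter_upwards [(eventually_le_nhds hj).filter_mono nhdsWithin_le_nhds] with ε hε
      exact fun _ => hε
    · exact Eventually.of_forall fun _ h => absurd h hj
  exact hsmall.exists

theorem sum_sub_ite_add_ite [Fintype W] [DecidableEq W] (x : W → ℝ) (A B : Finset W) (ε : ℝ) :
    ∑ j, (x j - (if j ∈ A then ε else 0) + (if j ∈ B then ε else 0)) =
      ∑ j, x j - ε * #A + ε * #B := by
  simp [sum_add_distrib, sum_sub_distrib, sum_ite_mem, mul_comm]

theorem LPFeasible.sub_ite_add_ite [DecidableEq W] {G : SimpleGraph W} {x : W → ℝ}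
    (hx : LPFeasible G x) {S : Finset W} (hS : IsVertexCover G S) {I0 I1 : Finset W}
    (hI0 : ∀ i, i ∈ I0 ↔ x i = 0) (hI1 : ∀ i, i ∈ I1 ↔ x i = 1) {ε : ℝ} (hε0 : 0 ≤ ε)
    (hε1 : ε ≤ 1) (hεx : ∀ j, 0 < x j → ε ≤ x j) :
    LPFeasible G (fun j => x j - (if j ∈ I1 \ S then ε else 0) + (if j ∈ I0 ∩ S then ε else 0)) := by
  set y := fun j => x j - (if j ∈ I1 \ S then ε else 0) + (if j ∈ I0 ∩ S then ε else 0)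
  have hdisj := disjoint_of_forall_eq_of_ne (hI0 · |>.1) (hI1 · |>.1) zero_ne_one
  have not_mem_of_mem_sdiff {j} (hj : j ∈ I1 \ S) : j ∉ I0 ∩ S := fun hj' =>
    disjoint_left.1 hdisj (mem_inter.1 hj').1 (mem_sdiff.1 hj).1
  have y_of_mem_sdiff {j} (hj : j ∈ I1 \ S) : y j = 1 - ε := by
    simp only [y, hj, not_mem_of_mem_sdiff hj, if_true, if_false, (hI1 j).1 (mem_sdiff.1 hj).1]
    ring
  have le_y {j} (hj : j ∉ I1 \ S) : x j ≤ y j := by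
    simp only [y, hj, if_false]
    split_ifs <;> linarith
  -- an edge leaving `I₁ \ S` ends in `S`, where `y` is either `ε` (on `I₀`) or `x ≥ ε`
  have edge_of_mem_sdiff {a b} (hab : G.Adj a b) (ha : a ∈ I1 \ S) : 1 ≤ y a + y b := by
    have hbS : b ∈ S := (hS hab).resolve_left (mem_sdiff.1 ha).2
    have hb : b ∉ I1 \ S := fun hb => (mem_sdiff.1 hb).2 hbS
    rw [y_of_mem_sdiff ha]
    by_cases hb0 : b ∈ I0
    · have hyb : y b = ε := by
        simp only [y, hb, mem_inter.2 ⟨hb0, hbS⟩, if_true, if_false, (hI0 b).1 hb0]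
        ring
      linarith
    · have hxb : 0 < x b := (hx.1 b).lt_of_ne fun h => hb0 ((hI0 b).2 h.symm)
      linarith [hεx b hxb, le_y hb]
  refine ⟨fun j => ?_, fun a b hab => ?_⟩
  · by_cases hj : j ∈ I1 \ S
    · linarith [y_of_mem_sdiff hj]
    · linarith [le_y hj, hx.1 j]
  · by_cases ha : a ∈ I1 \ S
    · exact edge_of_mem_sdiff hab ha
    by_cases hb : b ∈ I1 \ S
    · linarith [edge_of_mem_sdiff hab.symm hb]
    linarith [le_y ha, le_y hb, hx.2 hab]

end

section

variable {W : Type*} [Fintype W] [DecidableEq W] {G : SimpleGraph W} {x : W → ℝ}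
  {I0 I1 : Finset W}

theorem LPOptimal.card_sdiff_le_card_inter (hx : LPOptimal G x) (hI0 : ∀ i, i ∈ I0 ↔ x i = 0)
    (hI1 : ∀ i, i ∈ I1 ↔ x i = 1) {S : Finset W} (hS : IsVertexCover G S) :
    #(I1 \ S) ≤ #(I0 ∩ S) := by
  obtain ⟨ε, hε0, hε1, hεx⟩ := exists_pos_le_one_forall_le_of_pos x
  have hopt := hx.2 _ (hx.1.sub_ite_add_ite hS hI0 hI1 hε0.le hε1 hεx)
  rw [sum_sub_ite_add_ite] at hopt
  have : ε * #(I1 \ S) ≤ ε * #(I0 ∩ S) := by linarith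
  exact_mod_cast le_of_mul_le_mul_left this hε0

theorem LPOptimal.card_le_card_inter_union (hx : LPOptimal G x)
    (hI0 : ∀ i, i ∈ I0 ↔ x i = 0) (hI1 : ∀ i, i ∈ I1 ↔ x i = 1) {S : Finset W}
    (hS : IsVertexCover G S) : #I1 ≤ #(S ∩ (I0 ∪ I1)) := by
  have hdisj : Disjoint (S ∩ I0) (S ∩ I1) :=
    (disjoint_of_forall_eq_of_ne (hI0 · |>.1) (hI1 · |>.1) zero_ne_one).mono
      inter_subset_right inter_subset_right
  rw [inter_union_distrib_left, card_union_of_disjoint hdisj, inter_comm S I0, inter_comm S I1]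
  have := card_inter_add_card_sdiff I1 S
  have := hx.card_sdiff_le_card_inter hI0 hI1 hS
  omega

theorem IsVertexCover.union_of_deleteVerts (hx : LPOptimal G x)
    (hI0 : ∀ i, i ∈ I0 ↔ x i = 0) (hI1 : ∀ i, i ∈ I1 ↔ x i = 1) {R : Finset W}
    (hR : IsVertexCover (DeleteVerts G (I0 ∪ I1)) R) : IsVertexCover G (R ∪ I1) := by
  intro a b hab
  simp only [mem_union]
  by_cases ha : a ∈ I0 ∪ I1
  · rcases mem_union.1 ha with ha0 | ha1
    · exact .inr (.inr ((hI1 b).2 (hx.eq_one_of_adj_of_eq_zero hab ((hI0 a).1 ha0))))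
    · exact .inl (.inr ha1)
  by_cases hb : b ∈ I0 ∪ I1
  · rcases mem_union.1 hb with hb0 | hb1
    · exact .inl (.inr ((hI1 a).2 (hx.eq_one_of_adj_of_eq_zero hab.symm ((hI0 b).1 hb0))))
    · exact .inr (.inr hb1)
  exact (hR ⟨hab, ha, hb⟩).imp .inl .inl

end

/-- Let `x*` be an optimal solution of LPR on `G`, `I₀ = {i : x*_i = 0}`,
`I₁ = {i : x*_i = 1}`, `Ḡ = G \ (I₀ ∪ I₁)` and `γ ≥ 1`.  If `R` is a `γ`-optimal
vertex cover of `Ḡ` (a cover of size at most `γ` times that of any optimal cover of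
`Ḡ`), then `R ∪ I₁` is a `γ`-optimal vertex cover of `G`. -/
theorem nemhauser_trotter_gamma_optimal_cover (G : SimpleGraph V) (xstar : V → ℝ)
    (hx : LPOptimal G xstar) (I0 I1 : Finset V)
    (hI0 : ∀ i : V, i ∈ I0 ↔ xstar i = 0) (hI1 : ∀ i : V, i ∈ I1 ↔ xstar i = 1)
    (γ : ℝ) (hγ : 1 ≤ γ) (R : Finset V)
    (hR : IsVertexCover (DeleteVerts G (I0 ∪ I1)) R)
    (hRγ : ∀ T : Finset V, IsOptimalVertexCover (DeleteVerts G (I0 ∪ I1)) T →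
      (R.card : ℝ) ≤ γ * T.card) :
    IsVertexCover G (R ∪ I1) ∧
      ∀ S0 : Finset V, IsOptimalVertexCover G S0 →
        ((R ∪ I1).card : ℝ) ≤ γ * S0.card := by
  refine ⟨hR.union_of_deleteVerts hx hI0 hI1, fun S0 hS0 => ?_⟩
  obtain ⟨T, hT⟩ := exists_isOptimalVertexCover (DeleteVerts G (I0 ∪ I1))
  have hT_le : #T ≤ #(S0 \ (I0 ∪ I1)) := hT.2 _ (hS0.1.sdiff_deleteVerts _)
  have hI1_le : #I1 ≤ #(S0 ∩ (I0 ∪ I1)) := hx.card_le_card_inter_union hI0 hI1 hS0.1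
  have hS0_ge : (#T + #I1 : ℝ) ≤ #S0 := by
    have := card_inter_add_card_sdiff S0 (I0 ∪ I1)
    exact_mod_cast (by omega : #T + #I1 ≤ #S0)
  calc (#(R ∪ I1) : ℝ) ≤ #R + #I1 := by exact_mod_cast card_union_le R I1
    _ ≤ γ * #T + γ * #I1 := add_le_add (hRγ T hT) (le_mul_of_one_le_left (by positivity) hγ)
    _ = γ * (#T + #I1) := by ring
    _ ≤ γ * #S0 := mul_le_mul_of_nonneg_left hS0_ge (by linarith)
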